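/- arXiv:alg-geom/9610023 — 10 statements merged into one kernel-verified Lean document; each statement's English description precedes it below -/
import Mathlib

section
/- Let p be a prime, q a power of p, and K a finite field with q^2 elements. Let m be a positive divisor of q+1. Then the number of pairs (x,y) ∈ K × K with y^q + y = x^m equals m·q·(q-1) + q. (Equivalently, the curve y^q + y = x^m, which has exactly one point at infinity, has q^2 + 1 + (m-1)(q-1)q rational points over K, attaining the Hasse–Weil upper bound for its genus g = (m-1)(q-1)/2.) -/
/-!
Write `q = r ^ k` with `r` the characteristic and `T y = y ^ q + y`. The map `T` is additive and
lands in the subfield `{c | c ^ q = c}` of size `q`, while its kernel consists of roots of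
`X ^ q + X`, so has at most `q` elements. As `|ker T| * |im T| = q ^ 2`, `T` maps onto that subfield
with all fibres of size `q`. Hence the count is `q` times the number of `x` with `(x ^ m) ^ q = x ^ m`,
i.e. `x = 0` or `x ^ (m * (q - 1)) = 1`; as `m * (q - 1)` divides `q ^ 2 - 1`, the order of the
cyclic group `Kˣ`, there are exactly `m * (q - 1)` such units.
-/

theorem one_lt_of_card_eq_sq {K : Type*} [Fintype K] [Nontrivial K] {q : ℕ}
    (hK : Fintype.card K = q ^ 2) : 1 < q := by
  have := Fintype.one_lt_card (α := K)
  rw [hK] at this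
  by_contra! h
  interval_cases q <;> simp at this

namespace FiniteField

variable {K : Type*} [Field K] [Fintype K]

theorem natCard_pow_eq_one {n : ℕ} (hn : 0 < n) (h : n ∣ Fintype.card K - 1) :
    Nat.card {x : K // x ^ n = 1} = n := by
  have : NeZero n := ⟨hn.ne'⟩
  rw [Nat.card_congr <| Equiv.subtypeEquivRight fun x : K =>
      (Polynomial.mem_nthRoots hn (a := 1)).symm,
    ← Nat.card_congr (rootsOfUnityEquivNthRoots K n), rootsOfUnity_eq_ker,
    IsCyclic.card_powMonoidHom_ker, Nat.card_units, Nat.card_eq_fintype_card, Nat.gcd_eq_right h]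

theorem natCard_pow_add_eq_pow {n k : ℕ} (hn : 0 < n) (hk : 0 < k) (h : n ∣ Fintype.card K - 1) :
    Nat.card {x : K // x ^ (n + k) = x ^ k} = n + 1 := by
  have hiff (x : K) : x ^ (n + k) = x ^ k ↔ x ∈ insert 0 {x : K | x ^ n = 1} := by
    rcases eq_or_ne x 0 with rfl | hx
    · simp [hn.ne', hk.ne']
    · simp [hx, pow_add, pow_ne_zero k hx]
  rw [Nat.card_congr (Equiv.subtypeEquivRight hiff), Nat.card_coe_set_eq,
    Set.ncard_insert_of_notMem (by simp [hn.ne']), ← Nat.card_coe_set_eq]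
  exact congrArg (· + 1) (natCard_pow_eq_one hn h)

theorem natCard_pow_eq_self_of_card_eq_sq {q : ℕ} (hK : Fintype.card K = q ^ 2) :
    Nat.card {c : K // c ^ q = c} = q := by
  have hq := one_lt_of_card_eq_sq hK
  have h := natCard_pow_add_eq_pow (K := K) (n := q - 1) (k := 1) (by omega) one_pos
    ⟨q + 1, by rw [hK, mul_comm]; simpa using Nat.sq_sub_sq q 1⟩
  simpa only [pow_one, Nat.sub_add_cancel hq.le] using h

end FiniteField

namespace AddMonoidHom

variable {G H : Type*} [AddGroup G] [AddGroup H]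

open scoped Classical in
theorem natCard_fiber (f : G →+ H) (h : H) :
    Nat.card {g // f g = h} = if h ∈ f.range then Nat.card f.ker else 0 := by
  split_ifs with hh
  · obtain ⟨g₀, rfl⟩ := hh
    exact Nat.card_congr <| (Equiv.subRight g₀).subtypeEquiv fun g => by
      rw [Equiv.subRight_apply, mem_ker, map_sub, sub_eq_zero]
  · have : IsEmpty {g // f g = h} := ⟨fun ⟨g, hg⟩ => hh ⟨g, hg⟩⟩
    exact Nat.card_of_isEmpty

theorem natCard_solutions [Finite G] {X : Type*} [Fintype X] (f : G →+ H) (φ : X → H) :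
    Nat.card {xg : X × G // f xg.2 = φ xg.1} = Nat.card {x // φ x ∈ f.range} * Nat.card f.ker := by
  classical
  rw [Nat.card_congr (Equiv.subtypeProdEquivSigmaSubtype fun x g => f g = φ x), Nat.card_sigma]
  simp only [natCard_fiber, Finset.sum_ite, Finset.sum_const, smul_eq_mul, mul_zero, add_zero,
    Nat.card_eq_fintype_card, Fintype.card_subtype]

end AddMonoidHom

section FrobeniusTrace

open Polynomial

/-- When `Fintype.card K = (r ^ k) ^ 2`, this is the trace of `K` over its subfield with `r ^ k`
elements. -/
def frobeniusTrace (K : Type*) [CommRing K] (r k : ℕ) [ExpChar K r] : K →+ K :=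
  (iterateFrobenius K r k).toAddMonoidHom + AddMonoidHom.id K

variable {K : Type*} [Field K] {r k : ℕ} [ExpChar K r]

@[simp]
theorem frobeniusTrace_apply (y : K) : frobeniusTrace K r k y = y ^ r ^ k + y := rfl

theorem natCard_ker_frobeniusTrace_le [Finite K] (hq : 1 < r ^ k) :
    Nat.card (frobeniusTrace K r k).ker ≤ r ^ k := by
  classical
  set P : K[X] := X ^ r ^ k + X
  have hdeg : P.natDegree = r ^ k := by
    rw [natDegree_add_eq_left_of_natDegree_lt] <;> simp [hq]
  have hP : P ≠ 0 := ne_zero_of_natDegree_gt (hdeg ▸ hq)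
  have hsub : ((frobeniusTrace K r k).ker : Set K) ⊆ P.roots.toFinset := fun y hy => by
    simpa [P, hP] using hy
  calc Nat.card (frobeniusTrace K r k).ker ≤ Nat.card (P.roots.toFinset : Set K) :=
        Nat.card_mono (Finset.finite_toSet _) hsub
    _ ≤ P.natDegree := by
        rw [Nat.card_coe_set_eq, Set.ncard_coe_finset]
        exact (Multiset.toFinset_card_le _).trans (card_roots' P)
    _ = r ^ k := hdeg

variable [Fintype K]

theorem frobeniusTrace_pow_eq_self (hK : Fintype.card K = (r ^ k) ^ 2) (y : K) :
    frobeniusTrace K r k y ^ r ^ k = frobeniusTrace K r k y := by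
  rw [frobeniusTrace_apply, add_pow_expChar_pow, ← pow_mul, ← sq, ← hK, FiniteField.pow_card,
    add_comm]

theorem natCard_ker_and_range_frobeniusTrace (hK : Fintype.card K = (r ^ k) ^ 2) :
    Nat.card (frobeniusTrace K r k).ker = r ^ k ∧
      Nat.card (frobeniusTrace K r k).range = r ^ k := by
  have hq := one_lt_of_card_eq_sq hK
  have hker := natCard_ker_frobeniusTrace_le hq (K := K)
  have hrange : Nat.card (frobeniusTrace K r k).range ≤ r ^ k := by
    rw [← FiniteField.natCard_pow_eq_self_of_card_eq_sq hK]
    exact Nat.card_mono (Set.toFinite _) fun _ ⟨y, hy⟩ => hy ▸ frobeniusTrace_pow_eq_self hK y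
  have hmul : Nat.card (frobeniusTrace K r k).ker * Nat.card (frobeniusTrace K r k).range
      = r ^ k * r ^ k := by
    rw [← AddSubgroup.index_ker, AddSubgroup.card_mul_index, Nat.card_eq_fintype_card, hK, sq]
  constructor <;> nlinarith

theorem mem_range_frobeniusTrace_iff (hK : Fintype.card K = (r ^ k) ^ 2) (c : K) :
    c ∈ (frobeniusTrace K r k).range ↔ c ^ r ^ k = c := by
  suffices ((frobeniusTrace K r k).range : Set K) = {c | c ^ r ^ k = c} from Set.ext_iff.mp this c
  refine Set.eq_of_subset_of_ncard_le (fun _ ⟨y, hy⟩ => hy ▸ frobeniusTrace_pow_eq_self hK y) ?_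
  rw [← Nat.card_coe_set_eq, ← Nat.card_coe_set_eq, SetLike.coe_sort_coe,
    (natCard_ker_and_range_frobeniusTrace hK).2]
  exact (FiniteField.natCard_pow_eq_self_of_card_eq_sq hK).le

theorem natCard_frobeniusTrace_eq_pow (hK : Fintype.card K = (r ^ k) ^ 2) {m : ℕ} (hm : 0 < m)
    (hdvd : m ∣ r ^ k + 1) :
    Nat.card {xy : K × K // xy.2 ^ r ^ k + xy.2 = xy.1 ^ m} = m * r ^ k * (r ^ k - 1) + r ^ k := by
  set q := r ^ k
  have hq := one_lt_of_card_eq_sq hK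
  have hsolvable : Nat.card {x : K // x ^ m ∈ (frobeniusTrace K r k).range} = m * (q - 1) + 1 := by
    have hiff (x : K) : x ^ m ∈ (frobeniusTrace K r k).range ↔ x ^ (m * (q - 1) + m) = x ^ m := by
      rw [mem_range_frobeniusTrace_iff hK, ← pow_mul, ← Nat.mul_add_one, Nat.sub_add_cancel hq.le]
    rw [Nat.card_congr (Equiv.subtypeEquivRight hiff)]
    refine FiniteField.natCard_pow_add_eq_pow (Nat.mul_pos hm (by omega)) hm ?_
    have : q ^ 2 - 1 = (q + 1) * (q - 1) := by simpa using Nat.sq_sub_sq q 1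
    rw [hK, this]
    exact Nat.mul_dvd_mul hdvd dvd_rfl
  calc Nat.card {xy : K × K // xy.2 ^ q + xy.2 = xy.1 ^ m}
      = Nat.card {x : K // x ^ m ∈ (frobeniusTrace K r k).range} *
          Nat.card (frobeniusTrace K r k).ker := (frobeniusTrace K r k).natCard_solutions (· ^ m)
    _ = (m * (q - 1) + 1) * q := by rw [hsolvable, (natCard_ker_and_range_frobeniusTrace hK).1]
    _ = m * q * (q - 1) + q := by ring

end FrobeniusTrace

theorem affine_point_count_of_hermitian_quotient_general
    (q m : ℕ)
    (hm : 0 < m) (hdvd : m ∣ q + 1)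
    (K : Type*) [Field K] [Fintype K] (hK : Fintype.card K = q ^ 2) :
    Nat.card {xy : K × K // xy.2 ^ q + xy.2 = xy.1 ^ m} = m * q * (q - 1) + q := by
  obtain ⟨n, hr, hcard⟩ := FiniteField.card K (ringChar K)
  have : ExpChar K (ringChar K) := ExpChar.prime hr
  have hq_dvd : q ∣ ringChar K ^ (n : ℕ) := hcard ▸ hK ▸ dvd_pow_self q two_ne_zero
  obtain ⟨k, -, rfl⟩ := (Nat.dvd_prime_pow hr).mp hq_dvd
  exact natCard_frobeniusTrace_eq_pow hK hm hdvd

/-- Let `p` be a prime, `q` a power of `p`, and `K` a finite field with `q^2` elements.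
Let `m` be a positive divisor of `q+1`. Then the number of pairs `(x, y) ∈ K × K` with
`y^q + y = x^m` equals `m·q·(q-1) + q`; i.e. the maximal curve `y^q + y = x^m` has
`q^2 + 1 + (m-1)(q-1)q` rational points over `K` (one of which is at infinity). -/
theorem affine_point_count_of_hermitian_quotient
    (p q m : ℕ) (hp : p.Prime) (hq : ∃ e : ℕ, 0 < e ∧ q = p ^ e)
    (hm : 0 < m) (hdvd : m ∣ q + 1)
    (K : Type*) [Field K] [Fintype K] (hK : Fintype.card K = q ^ 2) :
    Nat.card {xy : K × K // xy.2 ^ q + xy.2 = xy.1 ^ m} = m * q * (q - 1) + q :=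
  affine_point_count_of_hermitian_quotient_general q m hm hdvd K hK
end

section
/- Let q ≥ 3 be an odd integer and let H₁ be the additive submonoid of ℕ generated by {q-1, q, q+1}. Then the complement ℕ \ H₁ is finite with exactly (q-1)^2/4 elements, and H₁ is symmetric: for every natural number n with 0 ≤ n ≤ (q-1)^2/2 - 1, one has n ∈ H₁ if and only if (q-1)^2/2 - 1 - n ∉ H₁. -/
/-!
Write `q = 2m + 1`. Since `{q-1, q, q+1}` is the interval `[2m, 2m+2]`, a sum of `k` generators
is exactly a number in `[2mk, 2mk + 2k]`; hence `2mk + r` with `r < 2m` lies in `H₁` iff `r ≤ 2k`.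
For `n = 2mk + r ≤ F := 2m² - 1` the complement is `F - n = 2m(m-1-k) + (2m-1-r)`, and
`r ≤ 2k ↔ ¬ (2m-1-r ≤ 2(m-1-k))`, which is symmetry with Frobenius number `F`. The involution
`n ↦ F - n` of `[0, F]` then swaps members and gaps, so there are `(F + 1)/2 = m²` gaps.
-/

open Finset

namespace AddSubmonoid

theorem mem_closure_Icc_iff {a b n : ℕ} :
    n ∈ closure (Set.Icc a b) ↔ ∃ k, k * a ≤ n ∧ n ≤ k * b := by
  constructor
  · intro hn
    induction hn using closure_induction with
    | mem x hx => exact ⟨1, by simpa using hx.1, by simpa using hx.2⟩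
    | zero => exact ⟨0, by simp, by simp⟩
    | add x y _ _ hx hy =>
      obtain ⟨k, hkx, hxk⟩ := hx
      obtain ⟨l, hly, hyl⟩ := hy
      exact ⟨k + l, by rw [add_mul]; omega, by rw [add_mul]; omega⟩
  · rintro ⟨k, hkn, hnk⟩
    induction k generalizing n with
    | zero => simp_all
    | succ k ih =>
      have hab : a ≤ b := Nat.le_of_mul_le_mul_left (hkn.trans hnk) k.succ_pos
      have := Nat.mul_le_mul_left k hab
      rw [add_one_mul] at hkn hnk
      -- peel off the generator `min b (n - k * a)`
      have hx : min b (n - k * a) ∈ closure (Set.Icc a b) :=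
        subset_closure ⟨by omega, min_le_left _ _⟩
      have hrest : n - min b (n - k * a) ∈ closure (Set.Icc a b) := ih (by omega) (by omega)
      simpa [Nat.sub_add_cancel (min_le_right b (n - k * a) |>.trans (Nat.sub_le n _))]
        using add_mem hrest hx

theorem mul_add_mem_closure_Icc_iff {a d k r : ℕ} (hr : r < a) :
    a * k + r ∈ closure (Set.Icc a (a + d)) ↔ r ≤ d * k := by
  rw [mem_closure_Icc_iff]
  constructor
  · rintro ⟨j, hja, hjb⟩
    have hjk : j ≤ k := by
      have : j * a < (k + 1) * a := by rw [add_one_mul, mul_comm k]; omega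
      exact Nat.lt_succ_iff.mp (Nat.lt_of_mul_lt_mul_right this)
    have : j * d ≤ k * d := Nat.mul_le_mul_right d hjk
    have : j * a ≤ k * a := Nat.mul_le_mul_right a hjk
    rw [mul_add, mul_comm a] at hjb
    rw [mul_comm d]
    omega
  · intro hrk
    exact ⟨k, by rw [mul_comm]; omega, by rw [mul_add, mul_comm k, mul_comm k]; omega⟩

end AddSubmonoid

theorem finite_and_two_mul_ncard_notMem_of_symmetric (S : Set ℕ) (F : ℕ)
    (hlarge : ∀ n, F < n → n ∈ S) (hsymm : ∀ n ≤ F, n ∈ S ↔ F - n ∉ S) :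
    {n | n ∉ S}.Finite ∧ 2 * {n | n ∉ S}.ncard = F + 1 := by
  classical
  have hgaps : {n | n ∉ S} = ↑((range (F + 1)).filter (· ∉ S)) := by
    ext n
    simp only [Set.mem_ofPred_eq, coe_filter, mem_range]
    exact ⟨fun h => ⟨Nat.lt_succ_of_le (not_lt.mp (mt (hlarge n) h)), h⟩, And.right⟩
  refine ⟨hgaps ▸ Finset.finite_toSet _, ?_⟩
  have hswap : #((range (F + 1)).filter (· ∈ S)) = #((range (F + 1)).filter (· ∉ S)) := by
    refine card_nbij' (F - ·) (F - ·) ?_ ?_ ?_ ?_ <;>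
      simp only [Set.MapsTo, Set.LeftInvOn, coe_filter, mem_range, Set.mem_ofPred_eq]
    · exact fun n hn => ⟨by omega, (hsymm n (by omega)).mp hn.2⟩
    · exact fun n hn => ⟨by omega,
        (hsymm (F - n) (by omega)).mpr (by rw [Nat.sub_sub_self (by omega)]; exact hn.2)⟩
    · exact fun n hn => Nat.sub_sub_self (by omega)
    · exact fun n hn => Nat.sub_sub_self (by omega)
  rw [hgaps, Set.ncard_coe_finset, two_mul]
  nth_rw 1 [← hswap]
  simpa using card_filter_add_card_filter_not (s := range (F + 1)) (· ∈ S)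

section IntervalSemigroup

variable {m : ℕ}

theorem mem_closure_Icc_two_mul_of_le (hm : 0 < m) {n : ℕ} (hn : 2 * m ^ 2 ≤ n) :
    n ∈ AddSubmonoid.closure (Set.Icc (2 * m) (2 * m + 2)) := by
  have h2m : 0 < 2 * m := by omega
  have hk : m ≤ n / (2 * m) := (Nat.le_div_iff_mul_le h2m).2 (by nlinarith)
  rw [← Nat.div_add_mod n (2 * m), AddSubmonoid.mul_add_mem_closure_Icc_iff (Nat.mod_lt n h2m)]
  have := Nat.mod_lt n h2m
  omega

theorem mem_closure_Icc_two_mul_iff_sub_notMem (hm : 0 < m) :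
    ∀ n ≤ 2 * m ^ 2 - 1, n ∈ AddSubmonoid.closure (Set.Icc (2 * m) (2 * m + 2)) ↔
      2 * m ^ 2 - 1 - n ∉ AddSubmonoid.closure (Set.Icc (2 * m) (2 * m + 2)) := by
  intro n hn
  have h2m : 0 < 2 * m := by omega
  set k := n / (2 * m)
  set r := n % (2 * m)
  have hr : r < 2 * m := Nat.mod_lt n h2m
  have hn' : 2 * m * k + r = n := Nat.div_add_mod n (2 * m)
  have hkm : k < m := by
    have : m * (2 * m) = 2 * m ^ 2 := by ring
    have : 0 < m ^ 2 := by positivity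
    exact (Nat.div_lt_iff_lt_mul h2m).2 (by omega)
  clear_value k r
  obtain ⟨j, rfl⟩ : ∃ j, m = k + 1 + j := ⟨m - k - 1, by omega⟩
  have hmirror :
      2 * (k + 1 + j) ^ 2 - 1 - n = 2 * (k + 1 + j) * j + (2 * (k + 1 + j) - 1 - r) := by
    have : 2 * (k + 1 + j) ^ 2 = 2 * (k + 1 + j) * k + 2 * (k + 1 + j) * j + 2 * (k + 1 + j) := by
      ring
    omega
  rw [hmirror, ← hn', AddSubmonoid.mul_add_mem_closure_Icc_iff hr,
    AddSubmonoid.mul_add_mem_closure_Icc_iff (by omega)]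
  omega

end IntervalSemigroup

/-- Let `q ≥ 3` be odd and `H₁` the additive submonoid of `ℕ` generated by
`{q-1, q, q+1}`. Then the set of gaps `ℕ \ H₁` is finite with exactly `(q-1)^2/4`
elements, and `H₁` is symmetric: for every `n ≤ (q-1)^2/2 - 1` one has
`n ∈ H₁ ↔ (q-1)^2/2 - 1 - n ∉ H₁`. -/
theorem semigroup_qm1_q_qp1_symmetric_with_genus
    (q : ℕ) (hq : 3 ≤ q) (hodd : Odd q)
    (H₁ : AddSubmonoid ℕ)
    (hH₁ : H₁ = AddSubmonoid.closure ({q - 1, q, q + 1} : Set ℕ)) :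
    {n : ℕ | n ∉ H₁}.Finite ∧
    {n : ℕ | n ∉ H₁}.ncard = (q - 1) ^ 2 / 4 ∧
    ∀ n : ℕ, n ≤ (q - 1) ^ 2 / 2 - 1 →
      (n ∈ H₁ ↔ (q - 1) ^ 2 / 2 - 1 - n ∉ H₁) := by
  obtain ⟨m, rfl⟩ := hodd
  have hm : 0 < m := by omega
  have hgen :
      ({2 * m + 1 - 1, 2 * m + 1, 2 * m + 1 + 1} : Set ℕ) = Set.Icc (2 * m) (2 * m + 2) := by
    ext n; simp only [Set.mem_insert_iff, Set.mem_singleton_iff, Set.mem_Icc]; omega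
  have hsq : (2 * m + 1 - 1) ^ 2 = 4 * m ^ 2 := by rw [Nat.add_sub_cancel]; ring
  have hm2 : 0 < m ^ 2 := by positivity
  have hF : (2 * m + 1 - 1) ^ 2 / 2 - 1 = 2 * m ^ 2 - 1 := by rw [hsq]; omega
  subst hH₁
  rw [hgen, hF, hsq, Nat.mul_div_cancel_left _ (by norm_num)]
  have hsymm := mem_closure_Icc_two_mul_iff_sub_notMem hm
  obtain ⟨hfin, hcard⟩ := finite_and_two_mul_ncard_notMem_of_symmetric _ (2 * m ^ 2 - 1)
    (fun n hn => mem_closure_Icc_two_mul_of_le hm (by omega)) hsymm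
  simp only [SetLike.mem_coe] at hfin hcard
  exact ⟨hfin, by omega, hsymm⟩
end

section
/- Let q ≥ 5 be an odd integer. For j ∈ {2, (q+1)/2, q-1}, the set S(j) = { a + b·j + c·q : a, b, c ∈ ℕ with a + b + c ≤ (q-3)/2 } has exactly (q-1)^2/4 elements. -/
/-!
Write `q = 2m + 3`, so that `(q - 3)/2 = m` and `(q - 1)^2/4 = (m + 1)^2`. In each of the three
cases `S(j)` is a union of pairwise separated intervals of integers, so its size is the sum of
their lengths:
* `j = 2`: for each `c ≤ m` the values `a + 2b` fill `[0, 2(m - c)]`, giving the block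
  `[cq, cq + 2(m - c)]`; the lengths are the first `m + 1` odd numbers.
* `j = (q + 1)/2 = m + 2`: with `u = b + 2c` one has `b·j + c·q = u(m + 1) + (u - c)`, so the
  block indexed by `u ≤ 2m` is `[u(m + 1) + ⌈u/2⌉, u(m + 1) + m]`.
* `j = q - 1 = 2m + 2`: with `i = b + c` one has `b·j + c·q = i·j + c`, so the block indexed by
  `i ≤ m` is `[i·j, i·j + m]`.
-/

open Finset

lemma ncard_iUnion_Ico_of_separated (N : ℕ) (s L : ℕ → ℕ)
    (hsep : ∀ i k, i < k → k < N → s i + L i ≤ s k) :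
    (⋃ i ∈ range N, Set.Ico (s i) (s i + L i)).ncard = ∑ i ∈ range N, L i := by
  have hcoe : (⋃ i ∈ range N, Set.Ico (s i) (s i + L i))
      = ↑((range N).biUnion fun i => Ico (s i) (s i + L i)) := by
    simp only [coe_biUnion, coe_Ico, mem_coe]
  rw [hcoe, Set.ncard_coe_finset, card_biUnion]
  · simp only [Nat.card_Ico, Nat.add_sub_cancel_left]
  · intro i hi k hk hik
    simp only [coe_range, Set.mem_Iio] at hi hk
    rw [Function.onFun, disjoint_left]
    intro x hxi hxk
    simp only [mem_Ico] at hxi hxk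
    rcases lt_or_gt_of_ne hik with h | h
    · have := hsep i k h hk; omega
    · have := hsep k i h hi; omega

lemma sum_range_two_mul_sub_add_one (m : ℕ) :
    ∑ c ∈ range (m + 1), (2 * (m - c) + 1) = (m + 1) ^ 2 := by
  induction m with
  | zero => simp
  | succ m ih =>
    have hstep : ∀ c ∈ range (m + 1), 2 * (m + 1 - c) + 1 = (2 * (m - c) + 1) + 2 := by
      intro c hc
      rw [mem_range] at hc
      omega
    rw [sum_range_succ, sum_congr rfl hstep, sum_add_distrib, ih, sum_const, card_range,
      smul_eq_mul]
    ring_nf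
    omega

lemma sum_range_sub_half (m : ℕ) :
    ∑ u ∈ range (2 * m + 1), (m + 1 - (u + 1) / 2) = (m + 1) ^ 2 := by
  induction m with
  | zero => simp
  | succ m ih =>
    have hstep : ∀ u ∈ range (2 * m + 1),
        m + 1 + 1 - (u + 1) / 2 = (m + 1 - (u + 1) / 2) + 1 := by
      intro u hu
      rw [mem_range] at hu
      omega
    rw [show 2 * (m + 1) + 1 = 2 * m + 1 + 1 + 1 by ring, sum_range_succ, sum_range_succ,
      sum_congr rfl hstep, sum_add_distrib, ih, sum_const, card_range, smul_eq_mul]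
    ring_nf
    omega

/-- `S(j)` for `q = 2m + 3`, whose defining bound `(q - 3)/2` is `m`. -/
def sumSet (m j : ℕ) : Set ℕ :=
  {x | ∃ a b c : ℕ, a + b + c ≤ m ∧ x = a + b * j + c * (2 * m + 3)}

lemma sumSet_two_eq (m : ℕ) :
    sumSet m 2 = ⋃ c ∈ range (m + 1),
      Set.Ico (c * (2 * m + 3)) (c * (2 * m + 3) + (2 * (m - c) + 1)) := by
  ext x
  simp only [sumSet, Set.mem_ofPred_eq, Set.mem_iUnion, Set.mem_Ico, mem_range, exists_prop]
  constructor
  · rintro ⟨a, b, c, hle, rfl⟩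
    exact ⟨c, by omega, by omega, by omega⟩
  · rintro ⟨c, hc, hlo, hhi⟩
    obtain ⟨t, rfl⟩ : ∃ t, x = c * (2 * m + 3) + t := ⟨x - c * (2 * m + 3), by omega⟩
    exact ⟨t % 2, t / 2, c, by omega, by omega⟩

lemma ncard_sumSet_two (m : ℕ) : (sumSet m 2).ncard = (m + 1) ^ 2 := by
  rw [sumSet_two_eq, ncard_iUnion_Ico_of_separated, sum_range_two_mul_sub_add_one]
  intro i k hik _
  have : (i + 1) * (2 * m + 3) ≤ k * (2 * m + 3) := Nat.mul_le_mul_right _ hik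
  rw [add_one_mul] at this
  omega

lemma sumSet_add_two_eq (m : ℕ) :
    sumSet m (m + 2) = ⋃ u ∈ range (2 * m + 1),
      Set.Ico (u * (m + 1) + (u + 1) / 2) (u * (m + 1) + (u + 1) / 2 + (m + 1 - (u + 1) / 2)) := by
  ext x
  simp only [sumSet, Set.mem_ofPred_eq, Set.mem_iUnion, Set.mem_Ico, mem_range, exists_prop]
  constructor
  · rintro ⟨a, b, c, hle, rfl⟩
    have hx : b * (m + 2) + c * (2 * m + 3) = (b + 2 * c) * (m + 1) + (b + c) := by ring
    exact ⟨b + 2 * c, by omega, by omega, by omega⟩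
  · rintro ⟨u, hu, hlo, hhi⟩
    obtain ⟨t, rfl⟩ : ∃ t, x = u * (m + 1) + t := ⟨x - u * (m + 1), by omega⟩
    rcases le_or_gt u t with h | h
    · refine ⟨t - u, u, 0, by omega, ?_⟩
      have : u * (m + 2) = u * (m + 1) + u := by ring
      omega
    · obtain ⟨c, b, rfl, hcb⟩ : ∃ c b, u = b + 2 * c ∧ t = b + c :=
        ⟨u - t, 2 * t - u, by omega, by omega⟩
      refine ⟨0, b, c, by omega, ?_⟩
      have : b * (m + 2) + c * (2 * m + 3) = (b + 2 * c) * (m + 1) + (b + c) := by ring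
      omega

lemma ncard_sumSet_add_two (m : ℕ) : (sumSet m (m + 2)).ncard = (m + 1) ^ 2 := by
  rw [sumSet_add_two_eq, ncard_iUnion_Ico_of_separated, sum_range_sub_half]
  intro i k hik _
  have : (i + 1) * (m + 1) ≤ k * (m + 1) := Nat.mul_le_mul_right _ hik
  rw [add_one_mul] at this
  omega

lemma sumSet_two_mul_add_two_eq (m : ℕ) :
    sumSet m (2 * m + 2) = ⋃ i ∈ range (m + 1),
      Set.Ico (i * (2 * m + 2)) (i * (2 * m + 2) + (m + 1)) := by
  ext x
  simp only [sumSet, Set.mem_ofPred_eq, Set.mem_iUnion, Set.mem_Ico, mem_range, exists_prop]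
  constructor
  · rintro ⟨a, b, c, hle, rfl⟩
    have : a + b * (2 * m + 2) + c * (2 * m + 3) = (b + c) * (2 * m + 2) + (a + c) := by ring
    exact ⟨b + c, by omega, by omega, by omega⟩
  · rintro ⟨i, hi, hlo, hhi⟩
    obtain ⟨t, rfl⟩ : ∃ t, x = i * (2 * m + 2) + t := ⟨x - i * (2 * m + 2), by omega⟩
    rcases le_total i t with h | h
    · refine ⟨t - i, 0, i, by omega, ?_⟩
      have : i * (2 * m + 3) = i * (2 * m + 2) + i := by ring
      omega
    · obtain ⟨b, rfl⟩ : ∃ b, i = b + t := ⟨i - t, by omega⟩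
      refine ⟨0, b, t, by omega, ?_⟩
      have : b * (2 * m + 2) + t * (2 * m + 3) = (b + t) * (2 * m + 2) + t := by ring
      omega

lemma ncard_sumSet_two_mul_add_two (m : ℕ) : (sumSet m (2 * m + 2)).ncard = (m + 1) ^ 2 := by
  rw [sumSet_two_mul_add_two_eq, ncard_iUnion_Ico_of_separated, sum_const, card_range,
    smul_eq_mul, sq]
  intro i k hik _
  have : (i + 1) * (2 * m + 2) ≤ k * (2 * m + 2) := Nat.mul_le_mul_right _ hik
  rw [add_one_mul] at this
  omega

/-- Let `q ≥ 5` be odd. For `j ∈ {2, (q+1)/2, q-1}`, the set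
`S(j) = {a + b·j + c·q : a, b, c ∈ ℕ, a + b + c ≤ (q-3)/2}` has exactly
`(q-1)^2/4` elements. -/
theorem card_canonical_orders_set
    (q : ℕ) (hq : 5 ≤ q) (hodd : Odd q)
    (j : ℕ) (hj : j = 2 ∨ j = (q + 1) / 2 ∨ j = q - 1) :
    {x : ℕ | ∃ a b c : ℕ, a + b + c ≤ (q - 3) / 2 ∧ x = a + b * j + c * q}.ncard
      = (q - 1) ^ 2 / 4 := by
  obtain ⟨m, rfl⟩ : ∃ m, q = 2 * m + 3 := by
    obtain ⟨k, hk⟩ := hodd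
    exact ⟨k - 1, by omega⟩
  have hcard : (2 * m + 3 - 1) ^ 2 / 4 = (m + 1) ^ 2 := by
    rw [show 2 * m + 3 - 1 = 2 * (m + 1) by omega, mul_pow]
    norm_num
  rw [show (2 * m + 3 - 3) / 2 = m by omega, hcard]
  change (sumSet m j).ncard = _
  rcases hj with rfl | rfl | rfl
  · exact ncard_sumSet_two m
  · rw [show (2 * m + 3 + 1) / 2 = m + 2 by omega]
    exact ncard_sumSet_add_two m
  · rw [show 2 * m + 3 - 1 = 2 * m + 2 by omega]
    exact ncard_sumSet_two_mul_add_two m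
end

section
/- Let q ≥ 5 be an odd integer and let S(2) = { a + 2b + c·q : a, b, c ∈ ℕ with a + b + c ≤ (q-3)/2 }. Then the set H(2) = ℕ \ (1 + S(2)) contains 0 and is closed under addition, i.e. it is an additive submonoid of ℕ. -/
/-- Let `q ≥ 5` be odd and `S(2) = {a + 2b + c·q : a, b, c ∈ ℕ, a + b + c ≤ (q-3)/2}`.
Then `H(2) = ℕ \ (1 + S(2))` contains `0` and is closed under addition, i.e. it is an
additive submonoid of `ℕ`. -/
theorem complement_of_shifted_orders_is_submonoid_for_j_two
    (q : ℕ) (hq : 5 ≤ q) (hodd : Odd q)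
    (S : Set ℕ)
    (hS : S = {x : ℕ | ∃ a b c : ℕ, a + b + c ≤ (q - 3) / 2 ∧ x = a + 2 * b + c * q}) :
    0 ∈ {n : ℕ | n ∉ (fun s => s + 1) '' S} ∧
    ∀ x y : ℕ, x ∈ {n : ℕ | n ∉ (fun s => s + 1) '' S} →
      y ∈ {n : ℕ | n ∉ (fun s => s + 1) '' S} →
      x + y ∈ {n : ℕ | n ∉ (fun s => s + 1) '' S} := by
  obtain ⟨k, hk⟩ := hodd
  set m := (q - 3) / 2 with hm
  have hqm : q = 2 * m + 3 := by omega
  -- characterization of membership in S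
  have memS : ∀ n : ℕ, n ∈ S ↔ ∃ c, c ≤ m ∧ c * q ≤ n ∧ n ≤ c * q + 2 * (m - c) := by
    intro n
    rw [hS]
    constructor
    · rintro ⟨a, b, c, habc, rfl⟩
      refine ⟨c, by omega, ?_⟩
      obtain ⟨p, hp⟩ : ∃ p, c * q = p := ⟨_, rfl⟩
      rw [hp]
      omega
    · rintro ⟨c, hc, h1, h2⟩
      obtain ⟨p, hp⟩ : ∃ p, c * q = p := ⟨_, rfl⟩
      rw [hp] at h1 h2
      refine ⟨(n - p) % 2, (n - p) / 2, c, by omega, ?_⟩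
      rw [hp]
      omega
  constructor
  · rintro ⟨s, hs, h⟩
    simp at h
  · intro x y hx hy
    simp only [Set.mem_setOf_eq] at hx hy ⊢
    rintro ⟨s, hsS, hseq⟩
    replace hseq : s + 1 = x + y := hseq
    rcases Nat.eq_zero_or_pos x with hx0 | hx0
    · exact hy ⟨s, hsS, show s + 1 = y by omega⟩
    rcases Nat.eq_zero_or_pos y with hy0 | hy0
    · exact hx ⟨s, hsS, show s + 1 = x by omega⟩
    -- x, y ≥ 1
    set n₁ := x - 1 with hn1
    set n₂ := y - 1 with hn2
    have hxS : n₁ ∉ S := fun h => hx ⟨n₁, h, show n₁ + 1 = x by omega⟩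
    have hyS : n₂ ∉ S := fun h => hy ⟨n₂, h, show n₂ + 1 = y by omega⟩
    rw [memS] at hxS hyS hsS
    push_neg at hxS hyS
    obtain ⟨c, hc, hc1, hc2⟩ := hsS
    set c₁ := n₁ / q with hc1d
    set r₁ := n₁ % q with hr1d
    set c₂ := n₂ / q with hc2d
    set r₂ := n₂ % q with hr2d
    have hd1 : q * c₁ + r₁ = n₁ := Nat.div_add_mod n₁ q
    have hd2 : q * c₂ + r₂ = n₂ := Nat.div_add_mod n₂ q
    have hr1q : r₁ < q := Nat.mod_lt _ (by omega)
    have hr2q : r₂ < q := Nat.mod_lt _ (by omega)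
    obtain ⟨p₁, hp₁⟩ : ∃ p, c₁ * q = p := ⟨_, rfl⟩
    obtain ⟨p₂, hp₂⟩ : ∃ p, c₂ * q = p := ⟨_, rfl⟩
    obtain ⟨p, hp⟩ : ∃ p, c * q = p := ⟨_, rfl⟩
    rw [mul_comm] at hd1 hd2
    rw [hp₁] at hd1
    rw [hp₂] at hd2
    rw [hp] at hc1 hc2
    have hA1 : c₁ ≤ m → 2 * (m - c₁) < r₁ := by
      intro h
      have := hxS c₁ h
      rw [hp₁] at this
      omega
    have hA2 : c₂ ≤ m → 2 * (m - c₂) < r₂ := by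
      intro h
      have := hyS c₂ h
      rw [hp₂] at this
      omega
    have hs12 : s = p₁ + p₂ + (r₁ + r₂ + 1) := by omega
    have e2 : s / q = c := by
      apply Nat.div_eq_of_lt_le
      · rw [hp]; omega
      · have : (c + 1) * q = p + q := by rw [add_mul, hp]; omega
        omega
    rcases Nat.lt_or_ge (r₁ + r₂ + 1) q with ht | ht
    · have e1 : s / q = c₁ + c₂ := by
        apply Nat.div_eq_of_lt_le
        · rw [add_mul, hp₁, hp₂]; omega
        · have : (c₁ + c₂ + 1) * q = p₁ + p₂ + q := by rw [add_mul, add_mul, hp₁, hp₂]; omega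
          omega
      have hcc : c = c₁ + c₂ := by omega
      have hpp : p = p₁ + p₂ := by
        rw [← hp, ← hp₁, ← hp₂, hcc, add_mul]
      omega
    · have e1 : s / q = c₁ + c₂ + 1 := by
        apply Nat.div_eq_of_lt_le
        · have : (c₁ + c₂ + 1) * q = p₁ + p₂ + q := by rw [add_mul, add_mul, hp₁, hp₂]; omega
          omega
        · have : (c₁ + c₂ + 1 + 1) * q = p₁ + p₂ + q + q := by
            rw [add_mul, add_mul, add_mul, hp₁, hp₂]; omega
          omega
      have hcc : c = c₁ + c₂ + 1 := by omega
      have hpp : p = p₁ + p₂ + q := by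
        rw [← hp, ← hp₁, ← hp₂, hcc, add_mul, add_mul]; omega
      omega
end

section
/- Let q ≥ 5 be an odd integer and let j ∈ {(q+1)/2, q-1}. With S(j) = { a + b·j + c·q : a, b, c ∈ ℕ with a + b + c ≤ (q-3)/2 }, the set ℕ \ (1 + S(j)) is not closed under addition: there exist natural numbers x, y ∉ 1 + S(j) with x + y ∈ 1 + S(j). -/
/-- Let `q ≥ 5` be odd and `j ∈ {(q+1)/2, q-1}`. With
`S(j) = {a + b·j + c·q : a, b, c ∈ ℕ, a + b + c ≤ (q-3)/2}`, the set `ℕ \ (1 + S(j))`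
is not closed under addition: there exist `x, y ∉ 1 + S(j)` with `x + y ∈ 1 + S(j)`. -/
theorem complement_of_shifted_orders_not_submonoid
    (q : ℕ) (hq : 5 ≤ q) (hodd : Odd q)
    (j : ℕ) (hj : j = (q + 1) / 2 ∨ j = q - 1)
    (S : Set ℕ)
    (hS : S = {x : ℕ | ∃ a b c : ℕ, a + b + c ≤ (q - 3) / 2 ∧ x = a + b * j + c * q}) :
    ∃ x y : ℕ, x ∉ (fun s => s + 1) '' S ∧ y ∉ (fun s => s + 1) '' S ∧
      x + y ∈ (fun s => s + 1) '' S := by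
  obtain ⟨k, hk⟩ := hodd
  have hk2 : 2 ≤ k := by omega
  have hjge : k + 1 ≤ j := by omega
  subst hS
  have hnot : (k + 1) ∉ (fun s => s + 1) '' {x : ℕ | ∃ a b c : ℕ,
      a + b + c ≤ (q - 3) / 2 ∧ x = a + b * j + c * q} := by
    rintro ⟨s, ⟨a, b, c, hle, rfl⟩, hs⟩
    simp only at hs
    have hb : b = 0 := by nlinarith [Nat.le_of_eq hs.symm]
    have hc : c = 0 := by nlinarith
    subst hb; subst hc
    omega
  refine ⟨k + 1, k + 1, hnot, hnot, ⟨q, ⟨0, 0, 1, by omega, by ring⟩, show q + 1 = _ by omega⟩⟩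
end

section
/- Let q ≥ 5 be an odd integer and let j be an integer with 2 ≤ j ≤ q-1. If the set {0, 1, 2, j, j+1, 2j, q, q+1, q+j, 2q} has at most 9 elements, then j = 2 or j = (q+1)/2 or j = q-1. -/
/-- Let `q ≥ 5` be an odd integer and `j` an integer with `2 ≤ j ≤ q-1`. If the set
`{0, 1, 2, j, j+1, 2j, q, q+1, q+j, 2q}` has at most 9 elements, then `j = 2` or
`j = (q+1)/2` or `j = q-1`. -/
theorem order_set_card_le_nine_forces_j
    (q j : ℤ) (hq : 5 ≤ q) (hodd : Odd q) (hj2 : 2 ≤ j) (hjq : j ≤ q - 1)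
    (hcard : ({0, 1, 2, j, j + 1, 2 * j, q, q + 1, q + j, 2 * q} : Finset ℤ).card ≤ 9) :
    j = 2 ∨ j = (q + 1) / 2 ∨ j = q - 1 := by
  by_contra h
  push_neg at h
  obtain ⟨h1, h2, h3⟩ := h
  obtain ⟨k, hk⟩ := hodd
  have : ({0, 1, 2, j, j + 1, 2 * j, q, q + 1, q + j, 2 * q} : Finset ℤ).card = 10 := by
    repeat rw [Finset.card_insert_of_notMem (by
      simp only [Finset.mem_insert, Finset.mem_singleton]
      omega)]
    simp
  omega
end

section
/- Let q ≥ 5 be an odd integer. Let H be an additive submonoid of ℕ containing q and q+1, and let m₁ be the least positive element of H. Assume (q+1)/2 ≤ m₁ ≤ q-1. If the set H ∩ {0, 1, ..., 2q+2} has at most 9 elements, then m₁ = q-1 or m₁ = (q+1)/2. (Indeed, 0, m₁, q, q+1, 2m₁, m₁+q, m₁+q+1, 2q, 2q+1, 2q+2 all lie in H ∩ [0, 2q+2], and they are pairwise distinct unless 2m₁ = q+1 or m₁ + q + 1 = 2q.) -/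
/-- Let `q ≥ 5` be odd, `H` an additive submonoid of `ℕ` containing `q` and `q+1`,
and `m₁` the least positive element of `H`. If `(q+1)/2 ≤ m₁ ≤ q-1` and
`H ∩ {0, 1, …, 2q+2}` has at most 9 elements, then `m₁ = q-1` or `m₁ = (q+1)/2`. -/
theorem first_nongap_of_small_semigroup
    (q : ℕ) (hq : 5 ≤ q) (hodd : Odd q)
    (H : AddSubmonoid ℕ) (hqH : q ∈ H) (hq1H : q + 1 ∈ H)
    (m₁ : ℕ) (hm₁H : m₁ ∈ H) (hm₁pos : 0 < m₁)
    (hleast : ∀ x ∈ H, 0 < x → m₁ ≤ x)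
    (hlb : (q + 1) / 2 ≤ m₁) (hub : m₁ ≤ q - 1)
    (hcard : {x : ℕ | x ∈ H ∧ x ≤ 2 * q + 2}.ncard ≤ 9) :
    m₁ = q - 1 ∨ m₁ = (q + 1) / 2 := by
  by_contra hcon
  push_neg at hcon
  obtain ⟨h1, h2⟩ := hcon
  obtain ⟨k, hk⟩ := hodd
  set S : Set ℕ := {x : ℕ | x ∈ H ∧ x ≤ 2 * q + 2} with hS
  have hfin : S.Finite := (Set.finite_Iic (2 * q + 2)).subset (fun x hx => hx.2)
  set F : Finset ℕ :=
    {0, m₁, q, q + 1, 2 * m₁, m₁ + q, m₁ + q + 1, 2 * q, 2 * q + 1, 2 * q + 2} with hF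
  have h2m : 2 * m₁ ∈ H := by
    have := H.add_mem hm₁H hm₁H; rwa [← two_mul] at this
  have hmq : m₁ + q ∈ H := H.add_mem hm₁H hqH
  have hmq1 : m₁ + q + 1 ∈ H := by
    rw [add_assoc]; exact H.add_mem hm₁H hq1H
  have h2q : 2 * q ∈ H := by
    have := H.add_mem hqH hqH; rwa [← two_mul] at this
  have h2q1 : 2 * q + 1 ∈ H := by
    have := H.add_mem hqH hq1H
    rwa [show q + (q + 1) = 2 * q + 1 by ring] at this
  have h2q2 : 2 * q + 2 ∈ H := by
    have := H.add_mem hq1H hq1H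
    rwa [show (q + 1) + (q + 1) = 2 * q + 2 by ring] at this
  have hsub : (F : Set ℕ) ⊆ S := by
    intro x hx
    simp only [hF, Finset.coe_insert, Set.mem_insert_iff, Finset.coe_singleton,
      Set.mem_singleton_iff] at hx
    rcases hx with rfl | rfl | rfl | rfl | rfl | rfl | rfl | rfl | rfl | rfl <;>
      refine ⟨?_, by omega⟩ <;> first
        | exact H.zero_mem
        | assumption
  have hcardF : F.card = 10 := by
    have n1 : (0:ℕ) ∉ ({m₁, q, q + 1, 2 * m₁, m₁ + q, m₁ + q + 1, 2 * q, 2 * q + 1, 2 * q + 2} : Finset ℕ) := by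
      simp only [Finset.mem_insert, Finset.mem_singleton, not_or]
      omega
    have n2 : m₁ ∉ ({q, q + 1, 2 * m₁, m₁ + q, m₁ + q + 1, 2 * q, 2 * q + 1, 2 * q + 2} : Finset ℕ) := by
      simp only [Finset.mem_insert, Finset.mem_singleton, not_or]
      omega
    have n3 : q ∉ ({q + 1, 2 * m₁, m₁ + q, m₁ + q + 1, 2 * q, 2 * q + 1, 2 * q + 2} : Finset ℕ) := by
      simp only [Finset.mem_insert, Finset.mem_singleton, not_or]
      omega
    have n4 : q + 1 ∉ ({2 * m₁, m₁ + q, m₁ + q + 1, 2 * q, 2 * q + 1, 2 * q + 2} : Finset ℕ) := by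
      simp only [Finset.mem_insert, Finset.mem_singleton, not_or]
      omega
    have n5 : 2 * m₁ ∉ ({m₁ + q, m₁ + q + 1, 2 * q, 2 * q + 1, 2 * q + 2} : Finset ℕ) := by
      simp only [Finset.mem_insert, Finset.mem_singleton, not_or]
      omega
    have n6 : m₁ + q ∉ ({m₁ + q + 1, 2 * q, 2 * q + 1, 2 * q + 2} : Finset ℕ) := by
      simp only [Finset.mem_insert, Finset.mem_singleton, not_or]
      omega
    have n7 : m₁ + q + 1 ∉ ({2 * q, 2 * q + 1, 2 * q + 2} : Finset ℕ) := by
      simp only [Finset.mem_insert, Finset.mem_singleton, not_or]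
      omega
    have n8 : 2 * q ∉ ({2 * q + 1, 2 * q + 2} : Finset ℕ) := by
      simp only [Finset.mem_insert, Finset.mem_singleton, not_or]
      omega
    have n9 : 2 * q + 1 ∉ ({2 * q + 2} : Finset ℕ) := by
      simp only [Finset.mem_singleton]
      omega
    rw [hF, Finset.card_insert_of_notMem n1, Finset.card_insert_of_notMem n2,
      Finset.card_insert_of_notMem n3, Finset.card_insert_of_notMem n4,
      Finset.card_insert_of_notMem n5, Finset.card_insert_of_notMem n6,
      Finset.card_insert_of_notMem n7, Finset.card_insert_of_notMem n8,
      Finset.card_insert_of_notMem n9, Finset.card_singleton]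
  have h10 : 10 ≤ S.ncard := by
    have := Set.ncard_le_ncard hsub hfin
    rwa [Set.ncard_coe_finset, hcardF] at this
  omega
end

section
/- Let p be a prime, q a power of p, and K a finite field with q^2 elements. Let n and m be positive integers with n·m = q+1 and m ≥ 2. Let f ∈ K[Y] be a squarefree polynomial of degree q with f(0) = 0, and suppose that Y^{q^2} - Y divides f^n - f^{n·q} in K[Y]. Then f = a₁·Y + a_q·Y^q for some nonzero a₁, a_q ∈ K; i.e. the coefficient of Y^i in f vanishes for all 2 ≤ i ≤ q-1, while the coefficients of Y and Y^q are nonzero. -/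
/-!
Put `F = f ^ n`, so that `deg F = n q < q²`. Modulo `Y^(q²) - Y` the `q`-th power map sends
`Y^(a + b q)` to `Y^(b + a q)` for `a, b < q`, so `F ≡ F^q` forces
`coeff F (b + a q) = (coeff F (a + b q))^q`: exchanging the two base-`q` digits of an exponent
does not change whether the coefficient of `F` vanishes, and the exchanged exponent is at most
`deg F`.

Write `a_i` for the coefficients of `f` and suppose `a_i ≠ 0` for some `1 < i < q`; let `t` be
the largest and `t'` the smallest such index. Since `p ∤ n` (as `n ∣ q + 1`), the coefficient of
`F` at `(n - 1) q + t` is `n a_q^(n-1) a_t ≠ 0`, and exchanging digits yields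
`(n - 1) + t q ≤ n q`, which forces `t < n` as `t ≥ 2`. Squarefreeness gives `a_1 ≠ 0`, so the
coefficient of `F` at `n - 1 + t'` is `n a_1^(n-1) a_t' ≠ 0`. As `n - 1 + t' < 2 n - 1 ≤ q`,
exchanging digits yields `(n - 1 + t') q ≤ n q`, contradicting `t' ≥ 2`.
-/

open Polynomial Finset

def digitSwap (q j : ℕ) : ℕ := j / q + j % q * q

theorem digitSwap_add_mul {q a : ℕ} (b : ℕ) (ha : a < q) :
    digitSwap q (a + b * q) = b + a * q := by
  have hq : 0 < q := by omega
  rw [digitSwap, Nat.add_mul_div_right _ _ hq, Nat.add_mul_mod_self_right, Nat.div_eq_of_lt ha,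
    Nat.mod_eq_of_lt ha, zero_add]

theorem digitSwap_lt {q j : ℕ} (hj : j < q ^ 2) : digitSwap q j < q ^ 2 := by
  have hq : 0 < q := Nat.pos_of_ne_zero (by rintro rfl; simp at hj)
  have hdiv : j / q < q := Nat.div_lt_of_lt_mul (by rwa [← sq])
  have hmod : j % q < q := Nat.mod_lt j hq
  rw [digitSwap, sq]
  nlinarith

theorem digitSwap_digitSwap {q j : ℕ} (hj : j < q ^ 2) : digitSwap q (digitSwap q j) = j := by
  have hdiv : j / q < q := Nat.div_lt_of_lt_mul (by rwa [← sq])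
  rw [show digitSwap q j = j / q + j % q * q from rfl, digitSwap_add_mul _ hdiv, add_comm,
    mul_comm, Nat.div_add_mod]

namespace Polynomial

section NoZeroDivisors

variable {R : Type*} [Semiring R] [NoZeroDivisors R]

theorem reverse_pow_of_domain (f : R[X]) (n : ℕ) : (f ^ n).reverse = f.reverse ^ n := by
  induction n with
  | zero => simpa using reverse_C (1 : R)
  | succ n ih => rw [pow_succ, reverse_mul_of_domain, ih, pow_succ]

theorem natDegree_pow_lt_sq {f : R[X]} {n q : ℕ} (hdeg : f.natDegree = q) (hnq : n < q) :
    (f ^ n).natDegree < q ^ 2 := by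
  rw [natDegree_pow, hdeg, sq]
  exact Nat.mul_lt_mul_of_pos_right hnq (by omega)

end NoZeroDivisors

section CommRing

variable {R : Type*} [CommRing R]

theorem X_pow_sq_sub_X_dvd_X_pow_mul_sub_X_pow_digitSwap (q j : ℕ) :
    (X ^ q ^ 2 - X : R[X]) ∣ X ^ (j * q) - X ^ digitSwap q j := by
  have hj : j * q = j % q * q + q ^ 2 * (j / q) := by
    conv_lhs => rw [← Nat.mod_add_div j q]
    ring
  rw [hj, digitSwap, add_comm (j / q), pow_add, pow_add, pow_mul _ (q ^ 2), ← mul_sub]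
  exact dvd_mul_of_dvd_right (sub_dvd_pow_sub_pow _ _ _) _

theorem eq_zero_of_X_pow_sub_X_dvd {N : ℕ} {G : R[X]} (h : X ^ N - X ∣ G)
    (hG : G.natDegree < N) : G = 0 := by
  nontriviality R
  obtain rfl | hN := eq_or_ne N 1
  · simpa using h
  have hmonic : (X ^ N - X : R[X]).Monic :=
    monic_X_pow_sub (by rw [degree_X]; exact_mod_cast (by omega : 1 < N))
  by_contra hG0
  refine hmonic.not_dvd_of_natDegree_lt hG0 ?_ h
  rwa [natDegree_sub_eq_left_of_natDegree_lt (by simp; omega), natDegree_X_pow]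

theorem pow_char_pow_eq_sum {p e N : ℕ} [ExpChar R p] {F : R[X]} (hF : F.natDegree < N) :
    F ^ p ^ e = ∑ j ∈ range N, C (F.coeff j ^ p ^ e) * X ^ (j * p ^ e) := by
  conv_lhs => rw [F.as_sum_range_C_mul_X_pow' hF]
  rw [sum_pow_char_pow]
  simp_rw [mul_pow, ← C_pow, ← pow_mul]

theorem coeff_eq_coeff_digitSwap_pow {p e q : ℕ} [ExpChar R p] (hq : q = p ^ e) {F : R[X]}
    (hF : F.natDegree < q ^ 2) (hdvd : X ^ q ^ 2 - X ∣ F ^ q - F) {k : ℕ} (hk : k < q ^ 2) :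
    F.coeff k = F.coeff (digitSwap q k) ^ q := by
  -- the reduction of `F ^ q` modulo `X ^ q ^ 2 - X`
  set G := ∑ j ∈ range (q ^ 2), C (F.coeff j ^ q) * X ^ digitSwap q j
  have hFG : X ^ q ^ 2 - X ∣ F ^ q - G := by
    rw [hq, pow_char_pow_eq_sum hF, ← hq, ← sum_sub_distrib]
    refine dvd_sum fun j _ => ?_
    rw [← mul_sub]
    exact dvd_mul_of_dvd_right (X_pow_sq_sub_X_dvd_X_pow_mul_sub_X_pow_digitSwap q j) _
  have hG : G.natDegree < q ^ 2 := by
    refine (natDegree_sum_le_of_forall_le _ _ fun j hj => ?_).trans_lt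
      (Nat.sub_lt (by omega) one_pos)
    exact (natDegree_C_mul_X_pow_le _ _).trans
      (Nat.le_sub_one_of_lt (digitSwap_lt (mem_range.mp hj)))
  have hGF : G = F := by
    refine sub_eq_zero.mp (eq_zero_of_X_pow_sub_X_dvd ?_
      ((natDegree_sub_le G F).trans_lt (max_lt hG hF)))
    simpa using dvd_sub hdvd hFG
  have hswap (j) (hj : j ∈ range (q ^ 2)) : k = digitSwap q j ↔ j = digitSwap q k :=
    ⟨fun h => by rw [h, digitSwap_digitSwap (mem_range.mp hj)],
      fun h => by rw [h, digitSwap_digitSwap hk]⟩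
  conv_lhs => rw [← hGF, finsetSum_coeff]
  simp only [coeff_C_mul_X_pow]
  rw [sum_congr rfl fun j hj => if_congr (hswap j hj) rfl rfl, sum_ite_eq',
    if_pos (mem_range.mpr (digitSwap_lt hk))]

theorem add_mul_le_natDegree_of_coeff_ne_zero [IsReduced R] {p e q : ℕ} [ExpChar R p]
    (hq : q = p ^ e) {F : R[X]} (hF : F.natDegree < q ^ 2) (hdvd : X ^ q ^ 2 - X ∣ F ^ q - F)
    {a b : ℕ} (ha : a < q) (hb : b < q) (h : F.coeff (a + b * q) ≠ 0) :
    b + a * q ≤ F.natDegree := by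
  refine le_natDegree_of_ne_zero ?_
  rw [coeff_eq_coeff_digitSwap_pow hq hF hdvd (by nlinarith), digitSwap_add_mul _ hb]
  exact pow_ne_zero _ h

theorem coeff_pow_of_coeff_eq_zero_of_lt {u : R[X]} {s : ℕ} (hs : 0 < s)
    (hu : ∀ i, 0 < i → i < s → u.coeff i = 0) (n : ℕ) :
    (u ^ n).coeff s = n * u.coeff 0 ^ (n - 1) * u.coeff s := by
  set v := u - C (u.coeff 0) with hv_def
  have hv : X ^ s ∣ v := X_pow_dvd_iff.mpr fun i hi => by
    obtain rfl | hi0 := Nat.eq_zero_or_pos i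
    · simp [v]
    · simp [v, hu i hi0 hi, coeff_C, hi0.ne']
  have hvs : v.coeff s = u.coeff s := by simp [v, coeff_C, hs.ne']
  -- `(c + v) ^ n = c ^ n + n * c ^ (n - 1) * v + k * v ^ 2`, and `X ^ (2 s)` divides the last term
  obtain ⟨k, hk⟩ := binomExpansion (X ^ n : R[X][X]) (C (u.coeff 0)) v
  simp only [eval_pow, eval_X, derivative_X_pow, eval_mul, eval_C] at hk
  have hv2 : X ^ (s * 2) ∣ k * v ^ 2 := by
    rw [pow_mul]
    exact dvd_mul_of_dvd_right (pow_dvd_pow_of_dvd hv 2) k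
  have hu' : u = C (u.coeff 0) + v := by rw [hv_def, add_sub_cancel]
  conv_lhs => rw [hu', hk]
  rw [coeff_add, coeff_add, X_pow_dvd_iff.mp hv2 s (by omega), ← C_pow, coeff_C,
    if_neg hs.ne', ← C_pow, ← map_natCast C, ← C_mul, coeff_C_mul, hvs]
  ring

theorem coeff_pow_sub_one_add_eq_of_coeff_eq_zero {f : R[X]} (hf0 : f.coeff 0 = 0) {t : ℕ}
    (ht : 1 < t) (hgap : ∀ i, 1 < i → i < t → f.coeff i = 0) {n : ℕ} (hn : 0 < n) :
    (f ^ n).coeff (n - 1 + t) = n * f.coeff 1 ^ (n - 1) * f.coeff t := by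
  have hf : f = divX f * X := by simpa [hf0] using (divX_mul_X_add f).symm
  have hgap' (i) (hi : 0 < i) (hit : i < t - 1) : (divX f).coeff i = 0 := by
    rw [coeff_divX]
    exact hgap _ (by omega) (by omega)
  conv_lhs => rw [hf]
  rw [mul_pow, show n - 1 + t = t - 1 + n by omega, coeff_mul_X_pow,
    coeff_pow_of_coeff_eq_zero_of_lt (by omega) hgap', coeff_divX, coeff_divX,
    Nat.sub_add_cancel ht.le, zero_add]

theorem coeff_pow_sub_one_mul_natDegree_add_eq_of_coeff_eq_zero [NoZeroDivisors R] {f : R[X]}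
    {t : ℕ} (ht : t < f.natDegree) (hgap : ∀ i, t < i → i < f.natDegree → f.coeff i = 0)
    {n : ℕ} (hn : 0 < n) :
    (f ^ n).coeff ((n - 1) * f.natDegree + t) = n * f.leadingCoeff ^ (n - 1) * f.coeff t := by
  set d := f.natDegree
  have hgap' (i) (hi : 0 < i) (hit : i < d - t) : f.reverse.coeff i = 0 := by
    rw [coeff_reverse, revAt_le (by omega)]
    exact hgap _ (by omega) (by omega)
  have hidx : (n - 1) * d + t = revAt (n * d) (d - t) := by
    obtain ⟨k, rfl⟩ : ∃ k, n = k + 1 := ⟨n - 1, by omega⟩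
    rw [revAt_le ((Nat.sub_le d t).trans (Nat.le_mul_of_pos_left d (by omega)))]
    simp only [add_tsub_cancel_right, add_mul, one_mul]
    omega
  rw [hidx, ← natDegree_pow, ← coeff_reverse, reverse_pow_of_domain,
    coeff_pow_of_coeff_eq_zero_of_lt (by omega) hgap', coeff_zero_reverse, coeff_reverse,
    revAt_le (by omega), Nat.sub_sub_self ht.le]

end CommRing

theorem coeff_one_ne_zero_of_squarefree {R : Type*} [Semiring R] [Nontrivial R] {f : R[X]}
    (hsf : Squarefree f) (hf0 : f.coeff 0 = 0) : f.coeff 1 ≠ 0 := fun h1 =>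
  not_isUnit_X <| hsf X <| by
    rw [← sq, X_pow_dvd_iff]
    intro d hd
    interval_cases d <;> assumption

end Polynomial

section FrobeniusCongruence

variable {K : Type*} [CommRing K] [IsDomain K] {p e q n : ℕ} [ExpChar K p] {f : K[X]}

theorem lt_of_coeff_ne_zero_of_coeff_eq_zero_above (hq : q = p ^ e) (hdeg : f.natDegree = q)
    (hn : 0 < n) (hnq : n < q) (hnK : (n : K) ≠ 0)
    (hdvd : X ^ q ^ 2 - X ∣ (f ^ n) ^ q - f ^ n) {t : ℕ} (ht : 1 < t) (htq : t < q)
    (hft : f.coeff t ≠ 0) (hgap : ∀ i, t < i → i < q → f.coeff i = 0) : t < n := by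
  have hF := natDegree_pow_lt_sq hdeg hnq
  have hf : f ≠ 0 := by
    rintro rfl
    simp at hft
  have hcoeff : (f ^ n).coeff (t + (n - 1) * q) ≠ 0 := by
    rw [add_comm, ← hdeg, coeff_pow_sub_one_mul_natDegree_add_eq_of_coeff_eq_zero (by omega)
      (hdeg ▸ hgap) hn]
    exact mul_ne_zero (mul_ne_zero hnK (pow_ne_zero _ (leadingCoeff_ne_zero.mpr hf))) hft
  have hle := add_mul_le_natDegree_of_coeff_ne_zero hq hF hdvd htq (by omega) hcoeff
  rw [natDegree_pow, hdeg] at hle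
  obtain h | h :=
    (Nat.le_of_mul_le_mul_right (by omega : t * q ≤ n * q) (by omega)).lt_or_eq
  · exact h
  · subst h
    omega

theorem le_of_coeff_ne_zero_of_coeff_eq_zero_below (hq : q = p ^ e) (hdeg : f.natDegree = q)
    (hn : 0 < n) (hnq : n < q) (hnK : (n : K) ≠ 0)
    (hdvd : X ^ q ^ 2 - X ∣ (f ^ n) ^ q - f ^ n) (hf0 : f.coeff 0 = 0) (hf1 : f.coeff 1 ≠ 0)
    {t : ℕ} (ht : 1 < t) (hft : f.coeff t ≠ 0)
    (hgap : ∀ i, 1 < i → i < t → f.coeff i = 0) : q ≤ n - 1 + t := by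
  by_contra! htq
  have hF := natDegree_pow_lt_sq hdeg hnq
  have hcoeff : (f ^ n).coeff (n - 1 + t + 0 * q) ≠ 0 := by
    rw [zero_mul, add_zero, coeff_pow_sub_one_add_eq_of_coeff_eq_zero hf0 ht hgap hn]
    exact mul_ne_zero (mul_ne_zero hnK (pow_ne_zero _ hf1)) hft
  have hle := add_mul_le_natDegree_of_coeff_ne_zero hq hF hdvd htq (by omega) hcoeff
  rw [natDegree_pow, hdeg, zero_add] at hle
  have := Nat.le_of_mul_le_mul_right hle (by omega)
  omega

theorem coeff_eq_zero_of_dvd_pow_sub (hq : q = p ^ e) (hdeg : f.natDegree = q) (hn : 0 < n)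
    (h2n : 2 * n ≤ q + 1) (hnK : (n : K) ≠ 0) (hdvd : X ^ q ^ 2 - X ∣ (f ^ n) ^ q - f ^ n)
    (hf0 : f.coeff 0 = 0) (hf1 : f.coeff 1 ≠ 0) {i : ℕ} (hi : 1 < i) (hiq : i < q) :
    f.coeff i = 0 := by
  classical
  by_contra hfi
  set S := (Ioo 1 q).filter (f.coeff · ≠ 0)
  have hS : S.Nonempty := ⟨i, mem_filter.mpr ⟨mem_Ioo.mpr ⟨hi, hiq⟩, hfi⟩⟩
  obtain ⟨htS, ht⟩ := mem_filter.mp (S.max'_mem hS)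
  obtain ⟨ht'S, ht'⟩ := mem_filter.mp (S.min'_mem hS)
  rw [mem_Ioo] at htS ht'S
  have htn := lt_of_coeff_ne_zero_of_coeff_eq_zero_above hq hdeg hn (by omega) hnK hdvd htS.1
    htS.2 ht fun j hj hjq => by_contra fun h =>
      (S.le_max' j (mem_filter.mpr ⟨mem_Ioo.mpr ⟨by omega, hjq⟩, h⟩)).not_gt hj
  have hqt' := le_of_coeff_ne_zero_of_coeff_eq_zero_below hq hdeg hn (by omega) hnK hdvd hf0
    hf1 ht'S.1 ht' fun j hj hjt => by_contra fun h =>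
      (S.min'_le j (mem_filter.mpr ⟨mem_Ioo.mpr ⟨hj, by omega⟩, h⟩)).not_gt hjt
  have := S.min'_le_max' hS
  omega

end FrobeniusCongruence

theorem natCast_ne_zero_of_dvd_prime_pow_add_one {R : Type*} [AddMonoidWithOne R] {p e n : ℕ}
    [CharP R p] (hp : p.Prime) (he : 0 < e) (h : n ∣ p ^ e + 1) : (n : R) ≠ 0 := by
  rw [Ne, CharP.cast_eq_zero_iff R p]
  exact fun hpn =>
    hp.not_dvd_one ((Nat.dvd_add_right (dvd_pow_self p he.ne')).mp (hpn.trans h))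

/-- Let `p` be a prime, `q` a power of `p`, and `K` a finite field with `q^2`
elements. Let `n, m` be positive integers with `n·m = q+1` and `m ≥ 2`. Let
`f ∈ K[Y]` be a squarefree polynomial of degree `q` with `f(0) = 0` such that
`Y^(q^2) - Y` divides `f^n - f^(n·q)`. Then `f = a₁·Y + a_q·Y^q` with
`a₁, a_q ∈ K` nonzero; i.e. `coeff f i = 0` for `2 ≤ i ≤ q-1` while the
coefficients of `Y` and `Y^q` are nonzero. -/
theorem squarefree_poly_with_frobenius_congruence_is_binomial
    (p q n m : ℕ) (hp : p.Prime) (hq : ∃ e : ℕ, 0 < e ∧ q = p ^ e)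
    (K : Type*) [Field K] [Fintype K] (hK : Fintype.card K = q ^ 2)
    (hn : 0 < n) (hm : 2 ≤ m) (hnm : n * m = q + 1)
    (f : K[X]) (hsf : Squarefree f) (hdeg : f.natDegree = q)
    (hf0 : f.coeff 0 = 0)
    (hdvd : (X ^ q ^ 2 - X : K[X]) ∣ f ^ n - f ^ (n * q)) :
    (∀ i : ℕ, 2 ≤ i → i ≤ q - 1 → f.coeff i = 0) ∧
    f.coeff 1 ≠ 0 ∧ f.coeff q ≠ 0 := by
  obtain ⟨e, he, hqe⟩ := hq
  have : Fact p.Prime := ⟨hp⟩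
  have : CharP K p :=
    charP_of_card_eq_prime_pow (f := 2 * e) (by rw [hK, hqe, ← pow_mul, mul_comm])
  have hfq : f.coeff q ≠ 0 := by
    rw [← hdeg, coeff_natDegree, leadingCoeff_ne_zero]
    rintro rfl
    rw [natDegree_zero, hqe] at hdeg
    exact (pow_pos hp.pos e).ne' hdeg.symm
  have hf1 := coeff_one_ne_zero_of_squarefree hsf hf0
  have h2n : 2 * n ≤ q + 1 := by nlinarith
  have hnK : (n : K) ≠ 0 :=
    natCast_ne_zero_of_dvd_prime_pow_add_one hp he (hqe ▸ Dvd.intro m hnm)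
  have hdvd' : X ^ q ^ 2 - X ∣ (f ^ n) ^ q - f ^ n := by
    rw [show (f ^ n) ^ q - f ^ n = -(f ^ n - f ^ (n * q)) by ring]
    exact hdvd.neg_right
  exact ⟨fun i hi2 hiq => coeff_eq_zero_of_dvd_pow_sub hqe hdeg hn h2n hnK hdvd' hf0 hf1
    (by omega) (by omega), hf1, hfq⟩
end

section
/- Let n and q be integers with 1 ≤ n ≤ q. Set M = ⌊q/n⌋ and e = q - M·n. Then 4·n·M·(q - n + e) ≤ (2q - n)^2, and if moreover n is odd then 4·n·M·(q - n + e) ≤ (2q - n)^2 - 1. (This is the arithmetic content of Castelnuovo's genus bound 2g ≤ M·(q - n + e) ≤ (2q-n)^2/(4n), resp. ((2q-n)^2 - 1)/(4n) for n odd, used for the linear system |(q+1)P₀| of dimension n+1 on a maximal curve.) -/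
/-- Let `1 ≤ n ≤ q`, `M = ⌊q/n⌋` and `e = q - M·n`. Then
`4·n·M·(q - n + e) ≤ (2q - n)^2`, and if moreover `n` is odd then
`4·n·M·(q - n + e) ≤ (2q - n)^2 - 1`. (The arithmetic content of Castelnuovo's
genus bound for the linear system `|(q+1)P₀|` on a maximal curve.) -/
theorem castelnuovo_bound_arithmetic
    (n q M e : ℕ) (hn : 1 ≤ n) (hq : n ≤ q)
    (hM : M = q / n) (he : e = q - M * n) :
    4 * n * M * (q - n + e) ≤ (2 * q - n) ^ 2 ∧
    (Odd n → 4 * n * M * (q - n + e) ≤ (2 * q - n) ^ 2 - 1) := by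
  subst hM
  have hdm := Nat.div_add_mod q n
  rw [Nat.mul_comm] at hdm
  have hmlt : q % n < n := Nat.mod_lt q hn
  have hemod : e = q % n := by omega
  have hqe : q = q / n * n + e := by omega
  have hen : e < n := by omega
  have h2q : n ≤ 2 * q := by omega
  have h1 : 1 ≤ (2 * q - n) ^ 2 := by
    have : 1 ≤ 2 * q - n := by omega
    nlinarith
  have hqe' : (q : ℤ) = (q / n : ℕ) * n + e := by exact_mod_cast hqe
  constructor
  · zify [hq, h2q]
    nlinarith [sq_nonneg ((n : ℤ) - 2 * e)]
  · intro hodd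
    obtain ⟨k, hk⟩ := hodd
    zify [hq, h2q, h1]
    have hne : ((n : ℤ) - 2 * e) ≠ 0 := by
      intro h
      have : (n : ℤ) = 2 * e := by linarith
      have : n = 2 * e := by exact_mod_cast this
      omega
    have hpos : 0 < ((n : ℤ) - 2 * e) ^ 2 := pow_two_pos_of_ne_zero hne
    have hs : 1 ≤ ((n : ℤ) - 2 * e) ^ 2 := hpos
    nlinarith
end

section
/- Let q, n, m be integers with q ≥ 2, n ≥ 1, m ≥ 2 and n·m = q+1, and set w₂ = n·((n-1)·m - n - 1)/2 + 2. Suppose rational numbers g, T₁, T₂ satisfy the three equations: (i) T₁ + T₂ = q^2 + 2gq + 1; (ii) (n(n+1)/2 + q)·(2g - 2) + (n+2)·(q+1) = T₁ + w₂·T₂; (iii) 2g - 2 = -2m + (m-1)·T₂. Then 2g = (m-1)(q-1) (and consequently T₂ = q+1). (This is the computation in Proposition 2.1 deducing the genus of a maximal curve with n·m = q+1 from the degree of the ramification divisor of |(q+1)P₀| and the Riemann–Hurwitz formula.) -/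
/-- Let `q, n, m` be integers with `q ≥ 2`, `n ≥ 1`, `m ≥ 2`, `n·m = q+1`, and set
`w₂ = n·((n-1)·m - n - 1)/2 + 2`. If rational numbers `g, T₁, T₂` satisfy
(i) `T₁ + T₂ = q^2 + 2gq + 1`,
(ii) `(n(n+1)/2 + q)·(2g-2) + (n+2)·(q+1) = T₁ + w₂·T₂`, and
(iii) `2g - 2 = -2m + (m-1)·T₂`,
then `2g = (m-1)(q-1)` and consequently `T₂ = q+1`. (The genus computation of
Proposition 2.1.) -/
theorem genus_computation_prop_2_1
    (q n m : ℤ) (hq : 2 ≤ q) (hn : 1 ≤ n) (hm : 2 ≤ m) (hnm : n * m = q + 1)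
    (w₂ : ℚ) (hw : w₂ = (n : ℚ) * (((n : ℚ) - 1) * (m : ℚ) - (n : ℚ) - 1) / 2 + 2)
    (g T₁ T₂ : ℚ)
    (h1 : T₁ + T₂ = (q : ℚ) ^ 2 + 2 * g * (q : ℚ) + 1)
    (h2 : ((n : ℚ) * ((n : ℚ) + 1) / 2 + (q : ℚ)) * (2 * g - 2)
            + ((n : ℚ) + 2) * ((q : ℚ) + 1) = T₁ + w₂ * T₂)
    (h3 : 2 * g - 2 = -2 * (m : ℚ) + ((m : ℚ) - 1) * T₂) :
    2 * g = ((m : ℚ) - 1) * ((q : ℚ) - 1) ∧ T₂ = (q : ℚ) + 1 := by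
  have hc : (n : ℚ) * (m : ℚ) = (q : ℚ) + 1 := by exact_mod_cast hnm
  have hq' : (q : ℚ) = (n : ℚ) * m - 1 := by linarith
  have hq0 : (q : ℚ) ≠ 0 := by
    have : (2 : ℚ) ≤ (q : ℚ) := by exact_mod_cast hq
    linarith
  have hm1 : (m : ℚ) - 1 ≠ 0 := by
    have : (2 : ℚ) ≤ (m : ℚ) := by exact_mod_cast hm
    linarith
  rw [hq'] at h1 h2
  subst hw
  have key : 2 * g * ((n : ℚ) * m - 1)
      = ((m : ℚ) - 1) * ((n : ℚ) * m - 1 - 1) * ((n : ℚ) * m - 1) := by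
    linear_combination ((m : ℚ) - 1) * h2 + ((m : ℚ) - 1) * h1
      - ((n : ℚ) * (((n : ℚ) - 1) * m - n - 1) / 2 + 1) * h3
  rw [hq'] at hq0
  have hg : 2 * g = ((m : ℚ) - 1) * ((n : ℚ) * m - 1 - 1) :=
    mul_right_cancel₀ hq0 key
  constructor
  · rw [hq']; exact hg
  · have h4 : ((m : ℚ) - 1) * T₂ = ((m : ℚ) - 1) * ((q : ℚ) + 1) := by
      linear_combination -h3 + hg + ((m : ℚ) - 1) * hc
    exact mul_left_cancel₀ hm1 h4
end
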